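/- For every k-reducing fpc Y and every n ≥ 0, the term Y(SS)S⋯S I (Y(SS) applied, with association to the left, to n copies of S and then to I) is a (k+3n+7)-reducing fpc. -/

import Mathlib

/-- Untyped λ-terms in de Bruijn notation (the variables are `ℕ`). -/
inductive Lam : Type
  | var : ℕ → Lam
  | app : Lam → Lam → Lam
  | abs : Lam → Lam
  deriving DecidableEq

namespace Lam

/-- Shift the free de Bruijn indices `≥ d` up by one. -/
def lift (d : ℕ) : Lam → Lam
  | var n => if n < d then var n else var (n + 1)
  | app s t => app (lift d s) (lift d t)
  | abs t => abs (lift (d + 1) t)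

/-- Capture-avoiding substitution `t[k := u]`. -/
def subst : Lam → ℕ → Lam → Lam
  | var n, k, u => if n < k then var n else if n = k then u else var (n - 1)
  | app s t, k, u => app (subst s k u) (subst t k u)
  | abs t, k, u => abs (subst t (k + 1) (lift 0 u))

/-- One-step β-reduction `→β`: the compatible closure of the β-rule. -/
inductive Beta : Lam → Lam → Prop
  | beta (t u : Lam) : Beta (Lam.app (Lam.abs t) u) (subst t 0 u)
  | appL {s s' : Lam} (t : Lam) : Beta s s' → Beta (Lam.app s t) (Lam.app s' t)
  | appR (s : Lam) {t t' : Lam} : Beta t t' → Beta (Lam.app s t) (Lam.app s t')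
  | abs {t t' : Lam} : Beta t t' → Beta (Lam.abs t) (Lam.abs t')

/-- `↠β`: the reflexive–transitive closure of `→β`. -/
def BetaStar : Lam → Lam → Prop := Relation.ReflTransGen Beta

/-- `→β^k`: the `k`-fold composition of `→β`. -/
def BetaN : ℕ → Lam → Lam → Prop
  | 0, s, t => s = t
  | k + 1, s, t => ∃ u, Beta s u ∧ BetaN k u t

/-- `=β`, β-convertibility: the equivalence closure of `→β`. -/
inductive Conv : Lam → Lam → Prop
  | rel {s t : Lam} : Beta s t → Conv s t
  | refl (s : Lam) : Conv s s
  | symm {s t : Lam} : Conv s t → Conv t s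
  | trans {s t u : Lam} : Conv s t → Conv t u → Conv s u

/-- The free variables of a term (as de Bruijn indices). -/
def FV : Lam → Finset ℕ
  | var n => {n}
  | app s t => FV s ∪ FV t
  | abs t => ((FV t).erase 0).image (· - 1)

/-- `Y` is a fixed point combinator (fpc): `Y x =β x (Y x)` for a variable `x` not free in `Y`. -/
def IsFPC (Y : Lam) : Prop :=
  ∀ x : ℕ, x ∉ FV Y → Conv (app Y (var x)) (app (var x) (app Y (var x)))

/-- `I = λx.x` -/
def combI : Lam := abs (var 0)

/-- `S = λxyz.xz(yz)` -/
def combS : Lam := abs (abs (abs (app (app (var 2) (var 0)) (app (var 1) (var 0)))))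

/-- `B = λxyz.x(yz)` -/
def combB : Lam := abs (abs (abs (app (var 2) (app (var 1) (var 0)))))

/-- `δ = λab.b(ab)` -/
def delta : Lam := abs (abs (app (var 0) (app (var 1) (var 0))))

/-- `η = λxf.f(xxf)` -/
def etaC : Lam := abs (abs (app (var 0) (app (app (var 1) (var 1)) (var 0))))

/-- Curry's fpc `Y₀ = λf.(λx.f(xx))(λx.f(xx))` -/
def curryY : Lam :=
  abs (app (abs (app (var 1) (app (var 0) (var 0))))
    (abs (app (var 1) (app (var 0) (var 0)))))

/-- `A B ⋯ B`: `A` applied to `n` copies of `B`, associating to the left. -/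
def appN (A B : Lam) : ℕ → Lam
  | 0 => A
  | n + 1 => app (appN A B n) B

/-- `M N₁ ⋯ Nₘ`: `M` applied to the terms in `L`, associating to the left. -/
def appList (M : Lam) (L : List Lam) : Lam := L.foldl app M

/-- An fpc `Y` is `k`-reducing if `Y x →β^k x (Y x)` (for a variable `x` not free in `Y`). -/
def KReducing (Y : Lam) (k : ℕ) : Prop :=
  ∀ x : ℕ, x ∉ FV Y → BetaN k (app Y (var x)) (app (var x) (app Y (var x)))

/-- An fpc is reducing if it is `k`-reducing for some `k`. -/
def Reducing (Y : Lam) : Prop := ∃ k, KReducing Y k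

lemma lift_lift : ∀ (t : Lam) {i j : ℕ}, i ≤ j →
    lift i (lift j t) = lift (j + 1) (lift i t)
  | var n, i, j, h => by
      simp only [lift]
      split_ifs <;> simp only [lift] <;> split_ifs <;> first | rfl | omega
  | app s t, _, _, h => by simp [lift, lift_lift s h, lift_lift t h]
  | abs t, _, _, h => by simp [lift, lift_lift t (Nat.succ_le_succ h)]

@[simp]
lemma subst_lift : ∀ (t : Lam) (i : ℕ) (u : Lam), subst (lift i t) i u = t
  | var n, i, u => by
      simp only [lift]
      split_ifs <;> simp only [subst] <;> split_ifs <;> first | rfl | omega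
  | app s t, i, u => by simp [lift, subst, subst_lift s, subst_lift t]
  | abs t, i, u => by simp [lift, subst, subst_lift t]

lemma lift_subst : ∀ (t : Lam) {i j : ℕ} (u : Lam), i ≤ j →
    lift i (subst t j u) = subst (lift i t) (j + 1) (lift i u)
  | var n, i, j, u, h => by
      simp only [subst, lift]
      split_ifs <;> simp only [subst, lift] <;> split_ifs <;> first | rfl | omega | (simp; omega)
  | app s t, _, _, u, h => by simp [lift, subst, lift_subst s u h, lift_subst t u h]
  | abs t, _, _, u, h => by
      simp only [lift, subst, lift_subst t (lift 0 u) (Nat.succ_le_succ h),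
        lift_lift u (Nat.zero_le _)]

lemma subst_subst : ∀ (t : Lam) {i j : ℕ} (u v : Lam), i ≤ j →
    subst (subst t i u) j v = subst (subst t (j + 1) (lift i v)) i (subst u j v)
  | var n, i, j, u, v, h => by
      rcases lt_trichotomy n (j + 1) with hn | rfl | hn
      · simp only [subst]
        split_ifs <;> first | rfl | omega | (simp only [subst]; split_ifs <;> first | rfl | omega)
      · have hi : ¬ j + 1 < i ∧ j + 1 ≠ i := by omega
        simp [subst, hi]
      · simp only [subst]
        split_ifs <;> first | rfl | omega | (simp only [subst]; split_ifs <;> first | rfl | omega)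
  | app s t, _, _, u, v, h => by simp [subst, subst_subst s u v h, subst_subst t u v h]
  | abs t, _, _, u, v, h => by
      simp only [subst, subst_subst t (lift 0 u) (lift 0 v) (Nat.succ_le_succ h),
        lift_lift v (Nat.zero_le _), lift_subst u v (Nat.zero_le _)]

lemma subst_eq_self_of_lt : ∀ (t : Lam) {k : ℕ} (u : Lam), (∀ m ∈ FV t, m < k) →
    subst t k u = t
  | var n, k, u, h => by simp [subst, h n (by simp [FV])]
  | app s t, k, u, h => by
      simp only [FV, Finset.mem_union] at h
      rw [subst, subst_eq_self_of_lt s u fun m hm => h m (.inl hm),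
        subst_eq_self_of_lt t u fun m hm => h m (.inr hm)]
  | abs t, k, u, h => by
      rw [subst, subst_eq_self_of_lt t (lift 0 u)]
      intro m hm
      obtain rfl | hm0 := Nat.eq_zero_or_pos m
      · omega
      · have := h (m - 1) (Finset.mem_image.2 ⟨m, Finset.mem_erase.2 ⟨hm0.ne', hm⟩, rfl⟩)
        omega

lemma Beta.subst {s t : Lam} (h : Beta s t) (k : ℕ) (u : Lam) :
    Beta (Lam.subst s k u) (Lam.subst t k u) := by
  induction h generalizing k u with
  | beta a b =>
      have := Beta.beta (Lam.subst a (k + 1) (lift 0 u)) (Lam.subst b k u)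
      rwa [← subst_subst a b u (Nat.zero_le k)] at this
  | appL t _ ih => exact .appL _ (ih k u)
  | appR s _ ih => exact .appR _ (ih k u)
  | abs _ ih => exact .abs (ih (k + 1) (lift 0 u))

lemma Beta.betaN_one {s t : Lam} (h : Beta s t) : BetaN 1 s t := ⟨t, h, rfl⟩

namespace BetaN

lemma trans : ∀ {m n : ℕ} {s t u : Lam}, BetaN m s t → BetaN n t u → BetaN (m + n) s u
  | 0, _, _, _, _, rfl, h => by simpa using h
  | m + 1, n, _, _, _, ⟨w, hw, h₁⟩, h₂ => by
      rw [Nat.add_right_comm]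
      exact ⟨w, hw, trans h₁ h₂⟩

instance {m n : ℕ} : Trans (BetaN m) (BetaN n) (BetaN (m + n)) := ⟨trans⟩

lemma map {f : Lam → Lam} (hf : ∀ {s t}, Beta s t → Beta (f s) (f t)) :
    ∀ {m : ℕ} {s t : Lam}, BetaN m s t → BetaN m (f s) (f t)
  | 0, _, _, rfl => rfl
  | _ + 1, _, _, ⟨w, hw, h⟩ => ⟨f w, hf hw, map hf h⟩

lemma appL {m : ℕ} {s s' : Lam} (t : Lam) (h : BetaN m s s') :
    BetaN m (app s t) (app s' t) :=
  map (Beta.appL t) h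

lemma appN {m : ℕ} {A A' : Lam} (B : Lam) (n : ℕ) (h : BetaN m A A') :
    BetaN m (Lam.appN A B n) (Lam.appN A' B n) := by
  induction n with
  | zero => exact h
  | succ n ih => exact ih.appL B

lemma subst {m : ℕ} {s t : Lam} (h : BetaN m s t) (k : ℕ) (u : Lam) :
    BetaN m (Lam.subst s k u) (Lam.subst t k u) :=
  map (fun hb => hb.subst k u) h

lemma conv : ∀ {m : ℕ} {s t : Lam}, BetaN m s t → Conv s t
  | 0, s, _, rfl => .refl s
  | _ + 1, _, _, ⟨_, hw, h⟩ => .trans (.rel hw) (conv h)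

end BetaN

lemma betaN_combS (a b c : Lam) :
    BetaN 3 (app (app (app combS a) b) c) (app (app a c) (app b c)) := by
  refine ⟨_, .appL c (.appL b (.beta _ a)), _, .appL c (.beta _ b), _, .beta _ c, ?_⟩
  simp [subst, lift_lift a (le_refl 0), BetaN]

lemma beta_combI (c : Lam) : Beta (app combI c) c := by
  simpa [combI, subst] using Beta.beta (var 0) c

lemma KReducing.betaN_app {Y : Lam} {k : ℕ} (hk : KReducing Y k) (M : Lam) :
    BetaN k (app Y M) (app M (app Y M)) := by
  obtain ⟨x, hx⟩ := (FV Y).exists_nat_subset_range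
  have hY : subst Y x M = Y := subst_eq_self_of_lt Y M fun m hm => Finset.mem_range.1 (hx hm)
  simpa [subst, hY] using (hk x fun h => Finset.notMem_range_self (hx h)).subst x M

/-- Each step is `S S M S →³ S S (M S)`: the argument `S` reappears as the head. -/
lemma betaN_appN_SS (M : Lam) : ∀ n : ℕ,
    BetaN (3 * n) (appN (app (app combS combS) M) combS n)
      (app (app combS combS) (appN M combS n))
  | 0 => rfl
  | n + 1 => (betaN_appN_SS M n).appL combS |>.trans (betaN_combS combS _ combS)

/-- With `Q = T S⋯S`: `T` unfolds to `SS T`, the `SS` travels past the `S`'s, and then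
`SS Q I M →³ S I (Q I) M →³ I M (Q I M) → M (Q I M)`. -/
lemma betaN_appN_combS_combI {T : Lam} {k : ℕ} (hT : BetaN k T (app (app combS combS) T))
    (n : ℕ) (M : Lam) :
    BetaN (k + 3 * n + 7) (app (app (appN T combS n) combI) M)
      (app M (app (app (appN T combS n) combI) M)) := by
  set Q := appN T combS n
  calc app (app Q combI) M
      BetaN k _ (app (app (appN (app (app combS combS) T) combS n) combI) M) :=
        ((hT.appN combS n).appL combI).appL M
      BetaN (3 * n) _ (app (app (app (app combS combS) Q) combI) M) :=
        ((betaN_appN_SS T n).appL combI).appL M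
      BetaN 3 _ (app (app (app combS combI) (app Q combI)) M) :=
        (betaN_combS combS Q combI).appL M
      BetaN 3 _ (app (app combI M) (app (app Q combI) M)) := betaN_combS combI (app Q combI) M
      BetaN 1 _ (app M (app (app Q combI) M)) := (Beta.appL _ (beta_combI M)).betaN_one

lemma KReducing.isFPC {Y : Lam} {k : ℕ} (hk : KReducing Y k) : IsFPC Y :=
  fun x hx => (hk x hx).conv

theorem YSSSnI_is_reducing_fpc_general (Y : Lam) (k : ℕ) (hk : KReducing Y k) (n : ℕ) :
    IsFPC (app (appN (app Y (app combS combS)) combS n) combI) ∧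
      KReducing (app (appN (app Y (app combS combS)) combS n) combI) (k + 3 * n + 7) := by
  have hred : KReducing (app (appN (app Y (app combS combS)) combS n) combI) (k + 3 * n + 7) :=
    fun x _ => betaN_appN_combS_combI (hk.betaN_app _) n (var x)
  exact ⟨hred.isFPC, hred⟩

/-- for every `k`-reducing fpc `Y` and every `n ≥ 0`, the term
    `Y(SS)S⋯S I` (`n` copies of `S`) is a `(k+3n+7)`-reducing fpc. -/
theorem YSSSnI_is_reducing_fpc (Y : Lam) (k : ℕ) (hY : IsFPC Y) (hk : KReducing Y k) (n : ℕ) :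
    IsFPC (app (appN (app Y (app combS combS)) combS n) combI) ∧
      KReducing (app (appN (app Y (app combS combS)) combS n) combI) (k + 3 * n + 7) :=
  YSSSnI_is_reducing_fpc_general Y k hk n

end Lam
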